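/- Let L ≥ 2, let S = {(p_t, ρ_t)}_{t=1}^T be a repeated cross-sectional dataset, and let w_1,…,w_T > 0 be wealths such that for every t, ρ_t is supported on the budget hyperplane {y ∈ ℝ^L_+ : p_t·y = w_t} (equivalently, in any rationalization, demands almost surely lie on the budget hyperplanes). Suppose the set of normalized price vectors {p_t/w_t : t = 1,…,T} is a triangular configuration. Then S is rationalized by the RPM if and only if S is rationalized by the RUM. -/

import Mathlib

open scoped BigOperators
open MeasureTheory

noncomputable section

/-- Dot product of two vectors in `ℝ^L`. -/
def dotp {L : ℕ} (p y : Fin L → ℝ) : ℝ := ∑ i, p i * y i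

/-- Membership in the nonnegative orthant `ℝ^L_+`. -/
def Nonneg {L : ℕ} (x : Fin L → ℝ) : Prop := ∀ i, 0 ≤ x i

/-- `y_t` is directly revealed preferred to `y_s`. -/
def DRP {L T : ℕ} (p y : Fin T → Fin L → ℝ) (t s : Fin T) : Prop :=
  dotp (p t) (y t) ≥ dotp (p t) (y s)

/-- The dataset `{(p_t, y_t)}` satisfies the Weak Axiom of Revealed Preference. -/
def WARP {L T : ℕ} (p y : Fin T → Fin L → ℝ) : Prop :=
  ¬ ∃ s t : Fin T, y t ≠ y s ∧ DRP p y t s ∧ DRP p y s t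

/-- The dataset `{(p_t, y_t)}` satisfies the Strong Axiom of Revealed Preference. -/
def SARP {L T : ℕ} (p y : Fin T → Fin L → ℝ) : Prop :=
  ¬ ∃ s t : Fin T, y t ≠ y s ∧ Relation.TransGen (DRP p y) t s ∧ DRP p y s t

/-- The repeated cross-sectional dataset `{(p_t, ρ_t)}` is rationalized by the
Random Preference Model: there is a probability space of consumers whose demand
systems almost surely lie in the nonnegative orthant and satisfy WARP, and whose
period-`t` demand distribution is `ρ_t`. -/
def RPMRationalizes {L T : ℕ} (p : Fin T → Fin L → ℝ)
    (ρ : Fin T → Measure (Fin L → ℝ)) : Prop :=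
  ∃ (Θ : Type) (_ : MeasurableSpace Θ) (μ : Measure Θ),
    IsProbabilityMeasure μ ∧
    ∃ y : Θ → Fin T → Fin L → ℝ,
      Measurable y ∧
      (∀ᵐ θ ∂μ, (∀ t, Nonneg (y θ t)) ∧ WARP p (y θ)) ∧
      (∀ t, Measure.map (fun θ => y θ t) μ = ρ t)

/-- The repeated cross-sectional dataset `{(p_t, ρ_t)}` is rationalized by the
Random Utility Model: same as the RPM but with SARP in place of WARP. -/
def RUMRationalizes {L T : ℕ} (p : Fin T → Fin L → ℝ)
    (ρ : Fin T → Measure (Fin L → ℝ)) : Prop :=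
  ∃ (Θ : Type) (_ : MeasurableSpace Θ) (μ : Measure Θ),
    IsProbabilityMeasure μ ∧
    ∃ y : Θ → Fin T → Fin L → ℝ,
      Measurable y ∧
      (∀ᵐ θ ∂μ, (∀ t, Nonneg (y θ t)) ∧ SARP p (y θ)) ∧
      (∀ t, Measure.map (fun θ => y θ t) μ = ρ t)

/-- The set of price vectors `{q_t}` is a triangular configuration: for any three
indices `t, s, k` there exist `λ ∈ [0,1]` and a permutation `σ` of the triple such
that the `σ(0)`-th vector lies coordinatewise below, or coordinatewise above, the
`λ`-convex combination of the other two. -/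
def TriangularConfig {L T : ℕ} (q : Fin T → Fin L → ℝ) : Prop :=
  ∀ t s k : Fin T, ∃ lam ∈ Set.Icc (0 : ℝ) 1, ∃ σ : Equiv.Perm (Fin 3),
    (∀ i, q ((![t, s, k]) (σ 0)) i ≤
        lam * q ((![t, s, k]) (σ 1)) i + (1 - lam) * q ((![t, s, k]) (σ 2)) i) ∨
    (∀ i, q ((![t, s, k]) (σ 0)) i ≥
        lam * q ((![t, s, k]) (σ 1)) i + (1 - lam) * q ((![t, s, k]) (σ 2)) i)
/-!
Almost surely a consumer's demands satisfy WARP and lie on the budget hyperplanes, so it suffices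
to show that WARP implies SARP for a deterministic dataset with `p_t ⬝ y_t = w_t`. With
`q_t = p_t / w_t`, observation `t` is revealed preferred to `s` iff `q_t ⬝ y_s ≤ 1`.

A SARP violation yields a closed revealed-preference walk along which the bundles are not all
equal; one of minimal period is a chordless cycle, of length at least three by WARP. For three
consecutive vertices `a, b, c` of it, evaluating the triangular comparison of `q_a, q_b, q_c` at a
suitable bundle contradicts an edge or a non-edge of the cycle in every case except
`q_b ≤ λ q_a + (1 - λ) q_c` with `λ < 1`. Each coordinate of `q` along the cycle is then bounded
by a convex combination of its two neighbours with positive weight on the next one, so its maximum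
propagates around the cycle. Hence `q` is constant along the cycle, and `q_b ⬝ y_a = q_a ⬝ y_a = 1`
is a chord.
-/

open Function Relation Matrix

lemma Function.Periodic.exists_lt_eq_add {α : Type*} {g : ℕ → α} {m : ℕ} (hg : Periodic g m)
    (hm : 0 < m) (i j : ℕ) : ∃ r < m, g j = g (i + r) := by
  refine ⟨(j + i * m - i) % m, Nat.mod_lt _ hm, ?_⟩
  have hper : g (j + i * m) = g j := by simpa using hg.nat_mul i j
  rw [(hg.const_add i).map_mod_nat, Nat.add_sub_cancel' (by nlinarith), hper]

lemma Function.Periodic.eq_apply_zero_of_le_combo {x : ℕ → ℝ} {m : ℕ} (hx : Periodic x m)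
    (hm : 0 < m) {lam : ℕ → ℝ} (h0 : ∀ i, 0 ≤ lam i) (h1 : ∀ i, lam i < 1)
    (h : ∀ i, x (i + 1) ≤ lam i * x i + (1 - lam i) * x (i + 2)) (i : ℕ) : x i = x 0 := by
  obtain ⟨i₀, -, hi₀⟩ := (Finset.range m).exists_max_image x ⟨0, Finset.mem_range.2 hm⟩
  have hle : ∀ j, x j ≤ x i₀ := fun j =>
    hx.map_mod_nat j ▸ hi₀ _ (Finset.mem_range.2 (Nat.mod_lt j hm))
  have hstep : ∀ j, x j = x i₀ → x (j + 1) = x i₀ := by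
    intro j hj
    have hj' := h (j + m - 1)
    rw [show j + m - 1 + 1 = j + m by omega, hx j, hj,
      show j + m - 1 + 2 = j + 1 + m by omega, hx (j + 1)] at hj'
    nlinarith [hle (j + m - 1), hle (j + 1), h0 (j + m - 1), h1 (j + m - 1)]
  have hmax : ∀ r, x (i₀ + r) = x i₀ := fun r => by
    induction r with
    | zero => rfl
    | succ r ih => exact hstep _ ih
  obtain ⟨r, -, hr⟩ := hx.exists_lt_eq_add hm i₀ i
  obtain ⟨r₀, -, hr₀⟩ := hx.exists_lt_eq_add hm i₀ 0
  rw [hr, hr₀, hmax, hmax]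

lemma Relation.TransGen.exists_chain {ι : Type*} {R : ι → ι → Prop} {a b : ι}
    (h : TransGen R a b) : ∃ n, ∃ u : ℕ → ι, u 0 = a ∧ u n = b ∧ ∀ j < n, R (u j) (u (j + 1)) := by
  induction h using TransGen.head_induction_on with
  | single hab =>
    refine ⟨1, Stream'.cons _ fun _ => b, rfl, rfl, ?_⟩
    rintro (_ | j) hj
    exacts [hab, by omega]
  | head hac _ ih =>
    obtain ⟨n, u, hu0, hun, hu⟩ := ih
    refine ⟨n + 1, Stream'.cons _ u, rfl, hun, ?_⟩
    rintro (_ | j) hj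
    · show R _ (u 0)
      rwa [hu0]
    · exact hu j (by omega)

section Cycles

variable {ι β : Type*} {R : ι → ι → Prop} {f : ι → β} {g : ℕ → ι} {m : ℕ}

structure IsClosedWalk (R : ι → ι → Prop) (g : ℕ → ι) (m : ℕ) : Prop where
  pos : 0 < m
  periodic : Periodic g m
  rel : ∀ i, R (g i) (g (i + 1))

structure IsChordlessCycle (R : ι → ι → Prop) (g : ℕ → ι) (m : ℕ) : Prop where
  three_le : 3 ≤ m
  periodic : Periodic g m
  rel : ∀ i, R (g i) (g (i + 1))
  not_rel : ∀ i k, 2 ≤ k → k < m → ¬ R (g i) (g (i + k))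

lemma IsChordlessCycle.not_rel_succ (hc : IsChordlessCycle R g m) (i : ℕ) :
    ¬ R (g (i + 1)) (g i) := by
  have h3 := hc.three_le
  have h := hc.not_rel (i + 1) (m - 1) (by omega) (by omega)
  rwa [show i + 1 + (m - 1) = i + m by omega, hc.periodic] at h

lemma isClosedWalk_mod {u : ℕ → ι} {n : ℕ} (hu : ∀ j < n, R (u j) (u (j + 1)))
    (hn : R (u n) (u 0)) : IsClosedWalk R (fun j => u (j % (n + 1))) (n + 1) where
  pos := n.succ_pos
  periodic j := by simp only [Nat.add_mod_right]
  rel j := by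
    have hlt : j % (n + 1) < n + 1 := Nat.mod_lt j n.succ_pos
    rcases (Nat.lt_succ_iff.1 hlt).lt_or_eq with hj | hj
    · have h1 : 1 % (n + 1) = 1 := Nat.one_mod_eq_one.2 (by omega)
      rw [Nat.add_mod_of_add_mod_lt (by omega), h1]
      exact hu _ hj
    · rw [Nat.succ_mod_succ_eq_zero_iff.2 hj, hj]
      exact hn

def NonconstWalkPeriodGE (R : ι → ι → Prop) (f : ι → β) (m : ℕ) : Prop :=
  ∀ g m', IsClosedWalk R g m' → (∃ i j, f (g i) ≠ f (g j)) → m ≤ m'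

lemma NonconstWalkPeriodGE.apply_eq_of_chain (hmin : NonconstWalkPeriodGE R f m) {u : ℕ → ι}
    {n : ℕ} (hnm : n + 1 < m) (hu : ∀ j < n, R (u j) (u (j + 1))) (hn : R (u n) (u 0)) {r : ℕ}
    (hr : r ≤ n) : f (u r) = f (u 0) := by
  by_contra hne
  have := hmin _ _ (isClosedWalk_mod hu hn)
    ⟨r, 0, by simpa [Nat.mod_eq_of_lt (Nat.lt_succ_of_le hr)] using hne⟩
  omega

lemma IsClosedWalk.not_rel_of_minimal (hg : IsClosedWalk R g m)
    (hmin : NonconstWalkPeriodGE R f m) (hsep : ∀ i {k}, 0 < k → k < m → f (g (i + k)) ≠ f (g i))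
    (i : ℕ) {k : ℕ} (hk : 2 ≤ k) (hkm : k < m) : ¬ R (g i) (g (i + k)) := by
  intro hchord
  have hend : i + k + (m - k) = i + m := by omega
  have h := hmin.apply_eq_of_chain (u := fun j => g (i + k + j)) (n := m - k) (by omega)
    (fun j _ => hg.rel (i + k + j)) (by simpa [hend, hg.periodic i] using hchord) le_rfl
  rw [hend, hg.periodic, add_zero] at h
  exact hsep i (by omega) hkm h.symm

variable (hR : ∀ a b b', f b = f b' → R a b → R a b')
include hR

/-- If `f` agrees at `g i` and `g (i + k)`, the walk splits there into two shorter closed walks,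
along which `f` is constant by minimality. -/
lemma IsClosedWalk.apply_add_ne_of_minimal (hg : IsClosedWalk R g m)
    (hnc : ∃ i j, f (g i) ≠ f (g j)) (hmin : NonconstWalkPeriodGE R f m) (i : ℕ) {k : ℕ}
    (hk : 0 < k) (hkm : k < m) : f (g (i + k)) ≠ f (g i) := by
  intro heq
  have hfirst : ∀ r ≤ k - 1, f (g (i + r)) = f (g i) := fun r hr => by
    refine hmin.apply_eq_of_chain (u := fun j => g (i + j)) (n := k - 1) (by omega)
      (fun j _ => hg.rel (i + j)) (hR _ _ _ heq ?_) hr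
    have h := hg.rel (i + (k - 1))
    rwa [show i + (k - 1) + 1 = i + k by omega] at h
  have hsecond : ∀ r ≤ m - k - 1, f (g (i + k + r)) = f (g i) := fun r hr => by
    rw [← heq]
    refine hmin.apply_eq_of_chain (u := fun j => g (i + k + j)) (n := m - k - 1) (by omega)
      (fun j _ => hg.rel (i + k + j)) (hR _ _ _ heq.symm ?_) hr
    have h := hg.rel (i + k + (m - k - 1))
    rwa [show i + k + (m - k - 1) + 1 = i + m by omega, hg.periodic] at h
  obtain ⟨i₀, j₀, hne⟩ := hnc
  have hconst : ∀ j, f (g j) = f (g i) := fun j => by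
    obtain ⟨r, hr, hj⟩ := hg.periodic.exists_lt_eq_add hg.pos i j
    rw [hj]
    rcases lt_or_ge r k with hrk | hrk
    · exact hfirst r (by omega)
    · simpa [show i + k + (r - k) = i + r by omega] using hsecond (r - k) (by omega)
  exact hne (by rw [hconst i₀, hconst j₀])

theorem exists_isChordlessCycle (hanti : ∀ a b, R a b → R b a → f a = f b) {a b : ι}
    (hab : TransGen R a b) (hba : R b a) (hne : f a ≠ f b) : ∃ g m, IsChordlessCycle R g m := by
  classical
  have hex : ∃ m, ∃ g, IsClosedWalk R g m ∧ ∃ i j, f (g i) ≠ f (g j) := by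
    obtain ⟨n, u, hu0, hun, hu⟩ := hab.exists_chain
    refine ⟨n + 1, _, isClosedWalk_mod hu (by rwa [hu0, hun]), 0, n, ?_⟩
    simpa [Nat.mod_eq_of_lt n.lt_succ_self, hu0, hun] using hne
  obtain ⟨g, hg, hnc⟩ := Nat.find_spec hex
  have hmin : NonconstWalkPeriodGE R f (Nat.find hex) := fun g' m' hg' hnc' =>
    Nat.find_min' hex ⟨g', hg', hnc'⟩
  have hsep := hg.apply_add_ne_of_minimal hR hnc hmin
  refine ⟨g, _, ?_, hg.periodic, hg.rel, hg.not_rel_of_minimal hmin hsep⟩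
  by_contra! hlt
  obtain ⟨i₀, j₀, hne₀⟩ := hnc
  interval_cases Nat.find hex
  · exact absurd hg.pos (lt_irrefl 0)
  · exact hne₀ (by rw [← hg.periodic.map_mod_nat i₀, ← hg.periodic.map_mod_nat j₀,
      Nat.mod_one, Nat.mod_one])
  · refine hsep 0 one_pos (by omega) (hanti _ _ (hg.rel 0) ?_).symm
    simpa [hg.periodic 0] using hg.rel 1

end Cycles

section Segments

variable {n : Type*}

def ComparableWithSegment (x u v : n → ℝ) : Prop :=
  x ∈ lowerClosure (segment ℝ u v) ∨ x ∈ upperClosure (segment ℝ u v)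

lemma ComparableWithSegment.symm {x u v : n → ℝ} (h : ComparableWithSegment x u v) :
    ComparableWithSegment x v u := by
  rwa [ComparableWithSegment, segment_symm]

lemma exists_le_combo_of_mem_lowerClosure_segment {x u v : n → ℝ}
    (hx : x ∈ lowerClosure (segment ℝ u v)) (hxu : ¬ x ≤ u) :
    ∃ lam : ℝ, 0 ≤ lam ∧ lam < 1 ∧ x ≤ lam • u + (1 - lam) • v := by
  obtain ⟨_, ⟨a, b, ha, hb, hab, rfl⟩, hxz⟩ := mem_lowerClosure.1 hx
  obtain rfl : b = 1 - a := by linarith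
  refine ⟨a, ha, lt_of_le_of_ne (by linarith) ?_, hxz⟩
  rintro rfl
  exact hxu (by simpa using hxz)

variable [Fintype n]

lemma dotProduct_combo (a b : ℝ) (u v y : n → ℝ) :
    (a • u + b • v) ⬝ᵥ y = a * (u ⬝ᵥ y) + b * (v ⬝ᵥ y) := by
  simp [add_dotProduct, smul_dotProduct]

lemma dotProduct_le_of_mem_lowerClosure_segment {x u v y : n → ℝ} {c : ℝ}
    (hx : x ∈ lowerClosure (segment ℝ u v)) (hy : 0 ≤ y) (hu : u ⬝ᵥ y ≤ c) (hv : v ⬝ᵥ y ≤ c) :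
    x ⬝ᵥ y ≤ c := by
  obtain ⟨_, ⟨a, b, ha, hb, hab, rfl⟩, hxz⟩ := mem_lowerClosure.1 hx
  calc x ⬝ᵥ y ≤ (a • u + b • v) ⬝ᵥ y := dotProduct_le_dotProduct_of_nonneg_right hxz hy
    _ = a * (u ⬝ᵥ y) + b * (v ⬝ᵥ y) := dotProduct_combo a b u v y
    _ ≤ a * c + b * c := by gcongr
    _ = c := by rw [← add_mul, hab, one_mul]

lemma le_of_mem_upperClosure_segment {x u v y : n → ℝ} {c : ℝ}
    (hx : x ∈ upperClosure (segment ℝ u v)) (hy : 0 ≤ y) (hxy : x ⬝ᵥ y ≤ c) (hu : c ≤ u ⬝ᵥ y)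
    (hv : c < v ⬝ᵥ y) : u ≤ x := by
  obtain ⟨_, ⟨a, b, ha, hb, hab, rfl⟩, hzx⟩ := mem_upperClosure.1 hx
  have hcomb : a * (u ⬝ᵥ y) + b * (v ⬝ᵥ y) ≤ c := by
    rw [← dotProduct_combo]
    exact (dotProduct_le_dotProduct_of_nonneg_right hzx hy).trans hxy
  have hbv : b * (v ⬝ᵥ y - c) ≤ 0 := by
    have hc : c = (a + b) * c := by rw [hab, one_mul]
    nlinarith [mul_nonneg ha (sub_nonneg.2 hu)]
  obtain rfl : b = 0 := le_antisymm (nonpos_of_mul_nonpos_left hbv (sub_pos.2 hv)) hb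
  obtain rfl : a = 1 := by linarith
  simpa using hzx

lemma not_le_of_one_lt_dotProduct {u v y : n → ℝ} (hy : 0 ≤ y) (hv : v ⬝ᵥ y = 1)
    (hu : 1 < u ⬝ᵥ y) : ¬ u ≤ v := fun huv =>
  hu.not_ge (hv ▸ dotProduct_le_dotProduct_of_nonneg_right huv hy)

end Segments

lemma Equiv.Perm.fin_three_cases (σ : Equiv.Perm (Fin 3)) :
    (σ 0 = 0 ∧ σ 1 = 1 ∧ σ 2 = 2) ∨ (σ 0 = 0 ∧ σ 1 = 2 ∧ σ 2 = 1) ∨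
    (σ 0 = 1 ∧ σ 1 = 0 ∧ σ 2 = 2) ∨ (σ 0 = 1 ∧ σ 1 = 2 ∧ σ 2 = 0) ∨
    (σ 0 = 2 ∧ σ 1 = 0 ∧ σ 2 = 1) ∨ (σ 0 = 2 ∧ σ 1 = 1 ∧ σ 2 = 0) := by
  revert σ; decide

lemma TriangularConfig.comparableWithSegment {L T : ℕ} {q : Fin T → Fin L → ℝ}
    (h : TriangularConfig q) (a b c : Fin T) :
    ComparableWithSegment (q a) (q b) (q c) ∨ ComparableWithSegment (q b) (q a) (q c) ∨
      ComparableWithSegment (q c) (q a) (q b) := by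
  obtain ⟨lam, ⟨h0, h1⟩, σ, hσ⟩ := h a b c
  set v := ![a, b, c]
  have hz : lam • q (v (σ 1)) + (1 - lam) • q (v (σ 2)) ∈ segment ℝ (q (v (σ 1))) (q (v (σ 2))) :=
    ⟨lam, 1 - lam, h0, by linarith, by ring, rfl⟩
  have hcmp : ComparableWithSegment (q (v (σ 0))) (q (v (σ 1))) (q (v (σ 2))) :=
    hσ.imp (fun hle => mem_lowerClosure.2 ⟨_, hz, hle⟩) fun hge => mem_upperClosure.2 ⟨_, hz, hge⟩
  rcases σ.fin_three_cases with ⟨e0, e1, e2⟩ | ⟨e0, e1, e2⟩ | ⟨e0, e1, e2⟩ | ⟨e0, e1, e2⟩ |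
      ⟨e0, e1, e2⟩ | ⟨e0, e1, e2⟩ <;>
    simp only [v, e0, e1, e2, Matrix.cons_val_zero, Matrix.cons_val_one, Matrix.cons_val_two,
      Matrix.head_cons, Matrix.tail_cons] at hcmp
  exacts [Or.inl hcmp, Or.inl hcmp.symm, Or.inr (Or.inl hcmp), Or.inr (Or.inl hcmp.symm),
    Or.inr (Or.inr hcmp), Or.inr (Or.inr hcmp.symm)]

section RevealedPreference

variable {L T : ℕ} {q y : Fin T → Fin L → ℝ}

lemma drp_iff_dotProduct_le_one (hb : ∀ t, q t ⬝ᵥ y t = 1) {t s : Fin T} :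
    DRP q y t s ↔ q t ⬝ᵥ y s ≤ 1 := by
  show q t ⬝ᵥ y s ≤ q t ⬝ᵥ y t ↔ _
  rw [hb]

variable {g : ℕ → Fin T} {m : ℕ}

variable (hb : ∀ t, q t ⬝ᵥ y t = 1)
include hb

lemma IsChordlessCycle.dotProduct_le_one (hc : IsChordlessCycle (DRP q y) g m) (i : ℕ) :
    q (g i) ⬝ᵥ y (g (i + 1)) ≤ 1 :=
  (drp_iff_dotProduct_le_one hb).1 (hc.rel i)

lemma IsChordlessCycle.one_lt_dotProduct (hc : IsChordlessCycle (DRP q y) g m) (i : ℕ) {k : ℕ}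
    (hk : 2 ≤ k) (hkm : k < m) : 1 < q (g i) ⬝ᵥ y (g (i + k)) :=
  not_le.1 fun h => hc.not_rel i k hk hkm ((drp_iff_dotProduct_le_one hb).2 h)

lemma IsChordlessCycle.one_lt_dotProduct_succ (hc : IsChordlessCycle (DRP q y) g m) (i : ℕ) :
    1 < q (g (i + 1)) ⬝ᵥ y (g i) :=
  not_le.1 fun h => hc.not_rel_succ i ((drp_iff_dotProduct_le_one hb).2 h)

lemma IsChordlessCycle.one_le_dotProduct_add_three (hc : IsChordlessCycle (DRP q y) g m)
    (i : ℕ) : 1 ≤ q (g i) ⬝ᵥ y (g (i + 3)) := by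
  rcases hc.three_le.eq_or_lt with rfl | h4
  · rw [hc.periodic i, hb]
  · exact (hc.one_lt_dotProduct hb i (by norm_num) h4).le

lemma IsChordlessCycle.exists_le_combo (hc : IsChordlessCycle (DRP q y) g m)
    (hy : ∀ t, 0 ≤ y t) (htri : TriangularConfig q) (i : ℕ) :
    ∃ lam : ℝ, 0 ≤ lam ∧ lam < 1 ∧ q (g (i + 1)) ≤ lam • q (g i) + (1 - lam) • q (g (i + 2)) := by
  have h3 := hc.three_le
  set a := g i
  set b := g (i + 1)
  set c := g (i + 2)
  set d := g (i + 3)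
  have hab : q a ⬝ᵥ y b ≤ 1 := hc.dotProduct_le_one hb i
  have hbc : q b ⬝ᵥ y c ≤ 1 := hc.dotProduct_le_one hb (i + 1)
  have hcd : q c ⬝ᵥ y d ≤ 1 := hc.dotProduct_le_one hb (i + 2)
  have hba : 1 < q b ⬝ᵥ y a := hc.one_lt_dotProduct_succ hb i
  have hcb : 1 < q c ⬝ᵥ y b := hc.one_lt_dotProduct_succ hb (i + 1)
  have hac : 1 < q a ⬝ᵥ y c := hc.one_lt_dotProduct hb i le_rfl (by omega)
  have hbd : 1 < q b ⬝ᵥ y d := hc.one_lt_dotProduct hb (i + 1) le_rfl (by omega)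
  have had : 1 ≤ q a ⬝ᵥ y d := hc.one_le_dotProduct_add_three hb i
  -- Only `q b` below `[q a, q c]` survives; every other case yields an edge the cycle lacks.
  rcases htri.comparableWithSegment a b c with (ha | ha) | (hb' | hb') | (hc' | hc')
  · exact absurd (dotProduct_le_of_mem_lowerClosure_segment ha (hy c) hbc (hb c).le) hac.not_ge
  · exact absurd (le_of_mem_upperClosure_segment ha (hy b) hab (hb b).ge hcb)
      (not_le_of_one_lt_dotProduct (hy a) (hb a) hba)
  · exact exists_le_combo_of_mem_lowerClosure_segment hb'
      (not_le_of_one_lt_dotProduct (hy a) (hb a) hba)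
  · rw [segment_symm] at hb'
    exact absurd (le_of_mem_upperClosure_segment hb' (hy c) hbc (hb c).ge hac)
      (not_le_of_one_lt_dotProduct (hy b) (hb b) hcb)
  · exact absurd (dotProduct_le_of_mem_lowerClosure_segment hc' (hy b) hab (hb b).le) hcb.not_ge
  · exact absurd (le_of_mem_upperClosure_segment hc' (hy d) hcd had hbd)
      (not_le_of_one_lt_dotProduct (hy c) (hb c) hac)

theorem not_isChordlessCycle_drp (hy : ∀ t, 0 ≤ y t) (htri : TriangularConfig q) :
    ¬ IsChordlessCycle (DRP q y) g m := by
  intro hc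
  choose lam h0 h1 hle using hc.exists_le_combo hb hy htri
  have hq : q (g 1) = q (g 0) := funext fun ℓ =>
    (hc.periodic.comp fun t => q t ℓ).eq_apply_zero_of_le_combo (by have := hc.three_le; omega)
      h0 h1 (fun i => hle i ℓ) 1
  apply hc.not_rel_succ 0
  rw [drp_iff_dotProduct_le_one hb, zero_add, hq, hb]

theorem sarp_of_warp (hy : ∀ t, 0 ≤ y t) (htri : TriangularConfig q) (hW : WARP q y) :
    SARP q y := by
  rintro ⟨s, t, hne, hts, hst⟩
  obtain ⟨g, m, hc⟩ := exists_isChordlessCycle (f := y)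
    (fun a b b' h hab => by simpa only [DRP, h] using hab)
    (fun a b hab hba => not_not.1 fun h => hW ⟨b, a, h, hab, hba⟩) hts hst hne
  exact not_isChordlessCycle_drp hb hy htri hc

end RevealedPreference

lemma warp_of_sarp {L T : ℕ} {p y : Fin T → Fin L → ℝ} (h : SARP p y) : WARP p y :=
  fun ⟨s, t, hne, hts, hst⟩ => h ⟨s, t, hne, .single hts, hst⟩

lemma dotp_div {L : ℕ} (p y : Fin L → ℝ) (c : ℝ) : dotp (fun i => p i / c) y = dotp p y / c := by
  simp [dotp, Finset.sum_div, div_mul_eq_mul_div]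

lemma drp_div {L T : ℕ} {p y : Fin T → Fin L → ℝ} {w : Fin T → ℝ} (hw : ∀ t, 0 < w t) :
    DRP (fun t i => p t i / w t) y = DRP p y := by
  ext t s
  simp only [DRP, dotp_div, ge_iff_le, div_le_div_iff_of_pos_right (hw t)]

theorem sarp_of_warp_of_budget {L T : ℕ} {p y : Fin T → Fin L → ℝ} {w : Fin T → ℝ}
    (hw : ∀ t, 0 < w t) (hy : ∀ t, Nonneg (y t)) (hb : ∀ t, dotp (p t) (y t) = w t)
    (htri : TriangularConfig (fun t i => p t i / w t)) (hW : WARP p y) : SARP p y := by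
  have hnorm : ∀ t, (fun i => p t i / w t) ⬝ᵥ y t = 1 := fun t => by
    show dotp _ _ = 1
    rw [dotp_div, hb, div_self (hw t).ne']
  have h := sarp_of_warp hnorm hy htri (by rwa [WARP, drp_div hw])
  rwa [SARP, drp_div hw] at h

lemma ae_mem_of_map_apply_eq_one {Θ E : Type*} [MeasurableSpace Θ] [MeasurableSpace E]
    {μ : Measure Θ} [IsProbabilityMeasure μ] {Y : Θ → E} (hY : Measurable Y) {s t : Set E}
    (ht : MeasurableSet t) (hst : s ⊆ t) (hs : μ.map Y s = 1) : ∀ᵐ θ ∂μ, Y θ ∈ t := by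
  have h : μ (Y ⁻¹' t) = 1 := le_antisymm prob_le_one <| by
    rw [← Measure.map_apply hY ht, ← hs]
    exact measure_mono hst
  exact ae_iff.2 ((prob_compl_eq_zero_iff (hY ht)).2 h)

lemma measurable_dotp {L : ℕ} (p : Fin L → ℝ) : Measurable (dotp p) := by
  unfold dotp
  fun_prop

lemma RUMRationalizes.rpmRationalizes {L T : ℕ} {p : Fin T → Fin L → ℝ}
    {ρ : Fin T → Measure (Fin L → ℝ)} (h : RUMRationalizes p ρ) : RPMRationalizes p ρ :=
  let ⟨Θ, _, μ, hμ, y, hy, hae, hmap⟩ := h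
  ⟨Θ, _, μ, hμ, y, hy, hae.mono fun _ hθ => ⟨hθ.1, warp_of_sarp hθ.2⟩, hmap⟩

theorem rpm_iff_rum_of_triangular_general
    {L T : ℕ}
    (p : Fin T → Fin L → ℝ)
    (w : Fin T → ℝ) (hw : ∀ t, 0 < w t)
    (ρ : Fin T → Measure (Fin L → ℝ))
    (hsupp : ∀ t, ρ t {x : Fin L → ℝ | Nonneg x ∧ dotp (p t) x = w t} = 1)
    (htri : TriangularConfig (fun t i => p t i / w t)) :
    RPMRationalizes p ρ ↔ RUMRationalizes p ρ := by
  refine ⟨?_, RUMRationalizes.rpmRationalizes⟩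
  rintro ⟨Θ, _, μ, hμ, y, hy, hae, hmap⟩
  have hbudget : ∀ t, ∀ᵐ θ ∂μ, dotp (p t) (y θ t) = w t := fun t =>
    ae_mem_of_map_apply_eq_one (measurable_pi_iff.1 hy t)
      (measurableSet_eq_fun (measurable_dotp (p t)) measurable_const)
      (s := {x | Nonneg x ∧ dotp (p t) x = w t}) (fun _ hx => hx.2) (by rw [hmap t]; exact hsupp t)
  refine ⟨Θ, _, μ, hμ, y, hy, ?_, hmap⟩
  filter_upwards [hae, ae_all_iff.2 hbudget] with θ ⟨hnn, hW⟩ hb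
  exact ⟨hnn, sarp_of_warp_of_budget hw hnn hb htri hW⟩

/-- Proposition 2 of the paper: if demands are supported on the
budget hyperplanes and the normalized prices `p_t / w_t` form a triangular
configuration, then rationalizability by the RPM is equivalent to
rationalizability by the RUM. -/
theorem rpm_iff_rum_of_triangular
    {L T : ℕ} (hL : 2 ≤ L) (hT : 1 ≤ T)
    (p : Fin T → Fin L → ℝ) (hp : ∀ t i, 0 < p t i)
    (w : Fin T → ℝ) (hw : ∀ t, 0 < w t)
    (ρ : Fin T → Measure (Fin L → ℝ))
    (hprob : ∀ t, IsProbabilityMeasure (ρ t))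
    (hsupp : ∀ t, ρ t {x : Fin L → ℝ | Nonneg x ∧ dotp (p t) x = w t} = 1)
    (htri : TriangularConfig (fun t i => p t i / w t)) :
    RPMRationalizes p ρ ↔ RUMRationalizes p ρ :=
  rpm_iff_rum_of_triangular_general p w hw ρ hsupp htri
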